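/- arXiv:math/0308203 — 2 statements merged into one kernel-verified Lean document; each statement's English description precedes it below -/
import Mathlib

section
/- Let A be a symmetric trace-free linear operator on a 3-dimensional real inner product space E, and let ω ∈ E. Then A(ω) · ω ≤ (√6/3) ‖A‖ ‖ω‖², where ‖A‖ is the Hilbert–Schmidt (Frobenius) norm of A. -/
open scoped RealInnerProductSpace

/- STATEMENT 2: If `A` is a symmetric trace-free operator on a 3-dimensional real
inner product space `E` and `N` is its Hilbert–Schmidt norm (`N² = tr(A²)`, `N ≥ 0`),
then `⟪A ω, ω⟫ ≤ (√6/3) N ‖ω‖²` for every `ω ∈ E`. -/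
theorem symmetric_tracefree_quadratic_bound {E : Type*} [NormedAddCommGroup E]
    [InnerProductSpace ℝ E] [FiniteDimensional ℝ E]
    (hdim : Module.finrank ℝ E = 3)
    (A : E →ₗ[ℝ] E) (hA : LinearMap.IsSymmetric A)
    (htr : LinearMap.trace ℝ E A = 0)
    (N : ℝ) (hN0 : 0 ≤ N) (hN : N ^ 2 = LinearMap.trace ℝ E (A ∘ₗ A))
    (ω : E) :
    ⟪A ω, ω⟫ ≤ (Real.sqrt 6 / 3) * N * ‖ω‖ ^ 2 := by
  set b := hA.eigenvectorBasis hdim with hbdef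
  set μ := hA.eigenvalues hdim with hμdef
  have hb : ∀ i, A (b i) = μ i • b i := fun i => hA.apply_eigenvectorBasis hdim i
  -- trace of A
  have h1 : LinearMap.trace ℝ E A = ∑ i, μ i := by
    rw [LinearMap.trace_eq_matrix_trace ℝ b.toBasis, Matrix.trace]
    congr 1
    ext i
    simp [Matrix.diag, LinearMap.toMatrix_apply, hb]
  have h2 : LinearMap.trace ℝ E (A ∘ₗ A) = ∑ i, (μ i) ^ 2 := by
    rw [LinearMap.trace_eq_matrix_trace ℝ b.toBasis, Matrix.trace]
    congr 1
    ext i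
    simp [Matrix.diag, LinearMap.toMatrix_apply, hb, sq]
  set K := Real.sqrt 6 / 3 * N with hKdef
  have hKnn : 0 ≤ K := by positivity
  have hK2 : K ^ 2 = 2 / 3 * N ^ 2 := by
    rw [hKdef, mul_pow, div_pow, Real.sq_sqrt (by norm_num : (6:ℝ) ≥ 0)]
    ring
  have hs : μ 0 + μ 1 + μ 2 = 0 := by
    have := htr; rw [h1, Fin.sum_univ_three] at this; exact this
  have hq : μ 0 ^ 2 + μ 1 ^ 2 + μ 2 ^ 2 = N ^ 2 := by
    rw [hN, h2, Fin.sum_univ_three]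
  -- each eigenvalue is at most K
  have hμK : ∀ i, μ i ≤ K := by
    intro i
    have hsq : μ i ^ 2 ≤ K ^ 2 := by
      rw [hK2]
      fin_cases i
      · show μ 0 ^ 2 ≤ 2 / 3 * N ^ 2
        have h0 : μ 0 ^ 2 = (μ 1 + μ 2) ^ 2 := by
          linear_combination (μ 0 - μ 1 - μ 2) * hs
        nlinarith [sq_nonneg (μ 1 - μ 2)]
      · show μ 1 ^ 2 ≤ 2 / 3 * N ^ 2
        have h0 : μ 1 ^ 2 = (μ 0 + μ 2) ^ 2 := by
          linear_combination (μ 1 - μ 0 - μ 2) * hs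
        nlinarith [sq_nonneg (μ 0 - μ 2)]
      · show μ 2 ^ 2 ≤ 2 / 3 * N ^ 2
        have h0 : μ 2 ^ 2 = (μ 0 + μ 1) ^ 2 := by
          linear_combination (μ 2 - μ 0 - μ 1) * hs
        nlinarith [sq_nonneg (μ 0 - μ 1)]
    calc μ i ≤ |μ i| := le_abs_self _
      _ = Real.sqrt ((μ i) ^ 2) := (Real.sqrt_sq_eq_abs _).symm
      _ ≤ Real.sqrt (K ^ 2) := Real.sqrt_le_sqrt hsq
      _ = K := Real.sqrt_sq hKnn
  -- expand the quadratic form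
  have hinner : ⟪A ω, ω⟫ = ∑ i, μ i * ⟪b i, ω⟫ ^ 2 := by
    rw [← b.sum_inner_mul_inner (A ω) ω]
    refine Finset.sum_congr rfl fun i _ => ?_
    have : ⟪A ω, b i⟫ = μ i * ⟪b i, ω⟫ := by
      rw [hA ω (b i), hb i, inner_smul_right, real_inner_comm]
    rw [this]; ring
  have hnorm : ‖ω‖ ^ 2 = ∑ i, ⟪b i, ω⟫ ^ 2 := by
    rw [← real_inner_self_eq_norm_sq, ← b.sum_inner_mul_inner ω ω]
    refine Finset.sum_congr rfl fun i _ => ?_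
    rw [real_inner_comm ω (b i), sq]
  rw [hinner, hnorm, Finset.mul_sum]
  exact Finset.sum_le_sum fun i _ =>
    mul_le_mul_of_nonneg_right (hμK i) (sq_nonneg _)
end

section
/- Let E be a 3-dimensional real inner product space and A : E → E a self-adjoint trace-free operator with eigenvalues λ₁ ≥ λ₂ ≥ λ₃. If A(ω)·ω = (√6/3)‖A‖‖ω‖² for some ω ≠ 0 (equality in the sharp estimate), then ω is an eigenvector for λ₁ and the eigenvalues are (λ, −λ/2, −λ/2) up to ordering with λ = λ₁ ≥ 0. -/
open scoped RealInnerProductSpace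
set_option maxHeartbeats 800000

/- STATEMENT 18: `E` 3-dimensional real inner product space, `A` self-adjoint
trace-free with eigenvalues `λ₁ ≥ λ₂ ≥ λ₃` (orthonormal eigenbasis `b`), and
`N = ‖A‖` the Hilbert–Schmidt norm (`N² = λ₁² + λ₂² + λ₃²`).  If
`⟪Aω, ω⟫ = (√6/3) N ‖ω‖²` for some `ω ≠ 0`, then `ω` is an eigenvector for `λ₁`
and the eigenvalues are `(λ, −λ/2, −λ/2)` with `λ = λ₁ ≥ 0`. -/
theorem equality_case_eigenvalue {E : Type*} [NormedAddCommGroup E]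
    [InnerProductSpace ℝ E] [FiniteDimensional ℝ E]
    (hdim : Module.finrank ℝ E = 3)
    (A : E →ₗ[ℝ] E) (hA : LinearMap.IsSymmetric A)
    (b : OrthonormalBasis (Fin 3) ℝ E) (lam : Fin 3 → ℝ)
    (heigen : ∀ i, A (b i) = lam i • b i)
    (horder : lam 0 ≥ lam 1 ∧ lam 1 ≥ lam 2)
    (htr : lam 0 + lam 1 + lam 2 = 0)
    (N : ℝ) (hN0 : 0 ≤ N) (hN : N ^ 2 = lam 0 ^ 2 + lam 1 ^ 2 + lam 2 ^ 2)
    (ω : E) (hω : ω ≠ 0)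
    (heq : ⟪A ω, ω⟫ = (Real.sqrt 6 / 3) * N * ‖ω‖ ^ 2) :
    A ω = lam 0 • ω ∧ lam 1 = -lam 0 / 2 ∧ lam 2 = -lam 0 / 2 ∧ 0 ≤ lam 0 := by
  obtain ⟨h01, h12⟩ := horder
  have hAc : ∀ i, ⟪A ω, b i⟫ = lam i * ⟪b i, ω⟫ := by
    intro i
    rw [real_inner_comm, ← hA (b i) ω, heigen i, real_inner_smul_left]
  have hnorm : ‖ω‖ ^ 2 = ⟪b 0, ω⟫ ^ 2 + ⟪b 1, ω⟫ ^ 2 + ⟪b 2, ω⟫ ^ 2 := by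
    have h := b.sum_inner_mul_inner ω ω
    rw [real_inner_self_eq_norm_sq] at h
    rw [← h, Fin.sum_univ_three, real_inner_comm ω (b 0), real_inner_comm ω (b 1),
      real_inner_comm ω (b 2)]
    ring
  have hinner : ⟪A ω, ω⟫
      = lam 0 * ⟪b 0, ω⟫ ^ 2 + lam 1 * ⟪b 1, ω⟫ ^ 2 + lam 2 * ⟪b 2, ω⟫ ^ 2 := by
    have h := b.sum_inner_mul_inner (A ω) ω
    rw [← h, Fin.sum_univ_three, hAc 0, hAc 1, hAc 2]
    ring
  set c0 : ℝ := ⟪b 0, ω⟫ with hc0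
  set c1 : ℝ := ⟪b 1, ω⟫ with hc1
  set c2 : ℝ := ⟪b 2, ω⟫ with hc2
  have hS : 0 < c0 ^ 2 + c1 ^ 2 + c2 ^ 2 := by
    rw [← hnorm]
    exact pow_pos (norm_pos_iff.mpr hω) 2
  have heq' : lam 0 * c0 ^ 2 + lam 1 * c1 ^ 2 + lam 2 * c2 ^ 2
      = (Real.sqrt 6 / 3) * N * (c0 ^ 2 + c1 ^ 2 + c2 ^ 2) := by
    rw [← hinner, ← hnorm, heq]
  have hlam0 : 0 ≤ lam 0 := by linarith
  have hs6 : Real.sqrt 6 ^ 2 = 6 := Real.sq_sqrt (by norm_num)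
  have hs6' : 0 ≤ Real.sqrt 6 := Real.sqrt_nonneg 6
  have h32 : 3 / 2 * lam 0 ^ 2 ≤ N ^ 2 := by nlinarith [sq_nonneg (lam 1 - lam 2)]
  have hle : lam 0 ≤ Real.sqrt 6 / 3 * N := by
    nlinarith [mul_nonneg hs6' hN0, sq_nonneg (lam 0 - Real.sqrt 6 / 3 * N)]
  have hray : lam 0 * c0 ^ 2 + lam 1 * c1 ^ 2 + lam 2 * c2 ^ 2
      ≤ lam 0 * (c0 ^ 2 + c1 ^ 2 + c2 ^ 2) := by
    nlinarith [sq_nonneg c1, sq_nonneg c2]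
  have hge : Real.sqrt 6 / 3 * N ≤ lam 0 := by
    have h : Real.sqrt 6 / 3 * N * (c0 ^ 2 + c1 ^ 2 + c2 ^ 2)
        ≤ lam 0 * (c0 ^ 2 + c1 ^ 2 + c2 ^ 2) := by rw [← heq']; exact hray
    exact le_of_mul_le_mul_right h hS
  have hlam0eq : lam 0 = Real.sqrt 6 / 3 * N := le_antisymm hle hge
  have hN2 : N ^ 2 = 3 / 2 * lam 0 ^ 2 := by nlinarith
  have h1 : lam 1 = -lam 0 / 2 := by nlinarith [sq_nonneg (lam 1 - lam 2)]
  have h2 : lam 2 = -lam 0 / 2 := by linarith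
  have hzeros : (lam 0 - lam 1) * c1 ^ 2 + (lam 0 - lam 2) * c2 ^ 2 = 0 := by
    have h := heq'
    rw [← hlam0eq] at h
    nlinarith
  have hz1 : (lam 0 - lam 1) * c1 ^ 2 = 0 := by
    nlinarith [mul_nonneg (by linarith : (0:ℝ) ≤ lam 0 - lam 1) (sq_nonneg c1),
      mul_nonneg (by linarith : (0:ℝ) ≤ lam 0 - lam 2) (sq_nonneg c2)]
  have hz2 : (lam 0 - lam 2) * c2 ^ 2 = 0 := by linarith
  have hzero0 : (lam 0 - lam 0) * c0 = 0 := by ring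
  have hzero1 : (lam 1 - lam 0) * c1 = 0 := by
    have h : ((lam 1 - lam 0) * c1) ^ 2 = (lam 0 - lam 1) * ((lam 0 - lam 1) * c1 ^ 2) := by
      ring
    rw [hz1, mul_zero] at h
    exact sq_eq_zero_iff.mp h
  have hzero2 : (lam 2 - lam 0) * c2 = 0 := by
    have h : ((lam 2 - lam 0) * c2) ^ 2 = (lam 0 - lam 2) * ((lam 0 - lam 2) * c2 ^ 2) := by
      ring
    rw [hz2, mul_zero] at h
    exact sq_eq_zero_iff.mp h
  have hAω : A ω = lam 0 • ω := by
    have e : ∀ i : Fin 3, ⟪b i, A ω - lam 0 • ω⟫ = (lam i - lam 0) * ⟪b i, ω⟫ := by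
      intro i
      rw [inner_sub_right, ← hA (b i) ω, heigen i, real_inner_smul_left,
        real_inner_smul_right]
      ring
    have hv : A ω - lam 0 • ω = 0 := by
      have hs := b.sum_repr (A ω - lam 0 • ω)
      rw [← hs, Fin.sum_univ_three, b.repr_apply_apply, b.repr_apply_apply,
        b.repr_apply_apply, e 0, e 1, e 2, ← hc0, ← hc1, ← hc2,
        hzero0, hzero1, hzero2]
      simp
    exact sub_eq_zero.mp hv
  exact ⟨hAω, h1, h2, hlam0⟩
end
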